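/- arXiv:2402.09842 — 5 statements merged into one kernel-verified Lean document; each statement's English description precedes it below -/
import Mathlib

section
/- Let R be a natural number and let u, v : ℝ² → ℝ be the polynomial functions u(x,y) = Σ_{r=0}^{R} Σ_{s=0}^{r} a_r^s x^{r-s} y^s and v(x,y) = Σ_{r=0}^{R} Σ_{s=0}^{r} A_r^s x^{r-s} y^s with real coefficients a_r^s, A_r^s. If u and v satisfy the Cauchy–Riemann equations (∂u/∂x = ∂v/∂y and ∂u/∂y = −∂v/∂x identically on ℝ²), then for all real x, y: u(x,y) = a_0^0 + Σ_{r=1}^{R} ( a_r^0 · Re((x+iy)^r) + (a_r^1/r) · Im((x+iy)^r) ) and v(x,y) = A_0^0 + Σ_{r=1}^{R} ( a_r^0 · Im((x+iy)^r) − (a_r^1/r) · Re((x+iy)^r) ). -/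
/-!
Put `b r s := a r s + i A r s`, the coefficients of `f = u + i v`. The Cauchy–Riemann equations
say `∂f/∂y = i ∂f/∂x`; comparing coefficients of `x^(r-s) y^s` gives
`(s + 1) b r (s + 1) = i (r - s) b r s`, hence `b r s = C(r, s) i^s b r 0`, so the degree-`r`
part of `f` is `b r 0 (x + i y)^r` by the binomial theorem. The case `s = 0` of the recurrence
gives `Im (b r 0) = -a r 1 / r` for `r ≥ 1`; taking real and imaginary parts finishes.
-/

open Finset

/-- `c r s` is the coefficient of `x ^ (r - s) * y ^ s`; only total degrees `r < M` occur. -/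
def bivariatePoly {K : Type*} [CommSemiring K] (c : ℕ → ℕ → K) (M : ℕ) (x y : K) : K :=
  ∑ r ∈ range M, ∑ s ∈ range (r + 1), c r s * x ^ (r - s) * y ^ s

lemma coeff_eq_of_forall_sum_pow_eq {K : Type*} [Field K] [Infinite K] {M : ℕ} {c d : ℕ → K}
    (h : ∀ x, ∑ i ∈ range M, c i * x ^ i = ∑ i ∈ range M, d i * x ^ i) :
    ∀ i < M, c i = d i := by
  intro i hi
  have hp : ∑ j ∈ range M, Polynomial.C (c j) * Polynomial.X ^ j
      = ∑ j ∈ range M, Polynomial.C (d j) * Polynomial.X ^ j :=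
    Polynomial.funext fun x => by simpa [Polynomial.eval_finsetSum] using h x
  simpa [Polynomial.finsetSum_coeff, Polynomial.coeff_C_mul, Polynomial.coeff_X_pow, hi]
    using congrArg (Polynomial.coeff · i) hp

lemma bivariatePoly_mul_left {K : Type*} [CommSemiring K] (c : ℕ → ℕ → K) (M : ℕ) (t w : K) :
    bivariatePoly c M t (t * w) = ∑ r ∈ range M, (∑ s ∈ range (r + 1), c r s * w ^ s) * t ^ r := by
  refine sum_congr rfl fun r _ => ?_
  rw [sum_mul]
  refine sum_congr rfl fun s hs => ?_
  rw [← Nat.sub_add_cancel (Nat.lt_succ_iff.mp (mem_range.mp hs)), pow_add, mul_pow]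
  simp only [Nat.add_sub_cancel]
  ring

lemma coeff_eq_of_forall_bivariatePoly_eq {K : Type*} [Field K] [Infinite K] {M : ℕ}
    {c d : ℕ → ℕ → K} (h : ∀ x y, bivariatePoly c M x y = bivariatePoly d M x y) :
    ∀ r < M, ∀ s ≤ r, c r s = d r s := by
  intro r hr s hs
  have hrow : ∀ w, ∑ s ∈ range (r + 1), c r s * w ^ s = ∑ s ∈ range (r + 1), d r s * w ^ s :=
    fun w => coeff_eq_of_forall_sum_pow_eq (fun t => by
      simpa only [bivariatePoly_mul_left] using h t (t * w)) r hr
  exact coeff_eq_of_forall_sum_pow_eq hrow s (Nat.lt_succ_of_le hs)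

lemma hasDerivAt_bivariatePoly_fst (c : ℕ → ℕ → ℝ) (M : ℕ) (x y : ℝ) :
    HasDerivAt (fun t => bivariatePoly c (M + 1) t y)
      (bivariatePoly (fun r s => ((r + 1 - s : ℕ) : ℝ) * c (r + 1) s) M x y) x := by
  have h : HasDerivAt (fun t => bivariatePoly c (M + 1) t y)
      (∑ r ∈ range (M + 1), ∑ s ∈ range (r + 1),
        c r s * (((r - s : ℕ) : ℝ) * x ^ (r - s - 1)) * y ^ s) x :=
    HasDerivAt.fun_sum fun r _ => HasDerivAt.fun_sum fun s _ =>
      ((hasDerivAt_pow (r - s) x).const_mul (c r s)).mul_const (y ^ s)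
  convert h using 1
  rw [sum_range_succ', sum_range_one]
  simp only [Nat.zero_sub, Nat.cast_zero, zero_mul, mul_zero, add_zero]
  refine sum_congr rfl fun r _ => ?_
  rw [sum_range_succ _ (r + 1)]
  simp only [Nat.sub_self, Nat.cast_zero, zero_mul, mul_zero, add_zero]
  refine sum_congr rfl fun s _ => ?_
  rw [show r + 1 - s - 1 = r - s by omega]
  ring

lemma hasDerivAt_bivariatePoly_snd (c : ℕ → ℕ → ℝ) (M : ℕ) (x y : ℝ) :
    HasDerivAt (fun t => bivariatePoly c (M + 1) x t)
      (bivariatePoly (fun r s => ((s : ℝ) + 1) * c (r + 1) (s + 1)) M x y) y := by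
  have h : HasDerivAt (fun t => bivariatePoly c (M + 1) x t)
      (∑ r ∈ range (M + 1), ∑ s ∈ range (r + 1),
        c r s * x ^ (r - s) * ((s : ℝ) * y ^ (s - 1))) y :=
    HasDerivAt.fun_sum fun r _ => HasDerivAt.fun_sum fun s _ =>
      (hasDerivAt_pow s y).const_mul (c r s * x ^ (r - s))
  convert h using 1
  rw [sum_range_succ', sum_range_one]
  simp only [Nat.cast_zero, zero_mul, mul_zero, add_zero]
  refine sum_congr rfl fun r _ => ?_
  rw [sum_range_succ' _ (r + 1)]
  simp only [Nat.cast_zero, zero_mul, mul_zero, add_zero]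
  refine sum_congr rfl fun s _ => ?_
  rw [show r + 1 - (s + 1) = r - s by omega]
  push_cast
  ring

lemma re_bivariatePoly (c : ℕ → ℕ → ℂ) (M : ℕ) (x y : ℝ) :
    (bivariatePoly c M x y).re = bivariatePoly (fun r s => (c r s).re) M x y := by
  simp [bivariatePoly, Complex.re_sum, ← Complex.ofReal_pow]

lemma im_bivariatePoly (c : ℕ → ℕ → ℂ) (M : ℕ) (x y : ℝ) :
    (bivariatePoly c M x y).im = bivariatePoly (fun r s => (c r s).im) M x y := by
  simp [bivariatePoly, Complex.im_sum, ← Complex.ofReal_pow]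

lemma eq_choose_mul_pow_of_succ_mul_eq {K : Type*} [Field K] [CharZero K] {b : ℕ → K} {w : K}
    {r : ℕ} (h : ∀ s < r, (s + 1 : K) * b (s + 1) = w * (r - s : ℕ) * b s) :
    ∀ s ≤ r, b s = r.choose s * w ^ s * b 0 := by
  intro s hs
  induction s with
  | zero => simp
  | succ s ih =>
    have hchoose : (r.choose (s + 1) : K) * (s + 1) = r.choose s * (r - s : ℕ) := by
      exact_mod_cast Nat.choose_succ_right_eq r s
    apply mul_left_cancel₀ (Nat.cast_add_one_ne_zero s : (s + 1 : K) ≠ 0)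
    rw [h s hs, ih (by omega)]
    linear_combination (-(w ^ (s + 1) * b 0)) * hchoose

lemma bivariatePoly_eq_sum_pow {K : Type*} [CommSemiring K] {c : ℕ → ℕ → K} {w : K} {M : ℕ}
    (hc : ∀ r < M, ∀ s ≤ r, c r s = r.choose s * w ^ s * c r 0) (x y : K) :
    bivariatePoly c M x y = ∑ r ∈ range M, c r 0 * (x + y * w) ^ r := by
  refine sum_congr rfl fun r hr => ?_
  rw [add_comm x, add_pow, mul_sum]
  refine sum_congr rfl fun s hs => ?_
  rw [hc r (mem_range.mp hr) s (Nat.lt_succ_iff.mp (mem_range.mp hs))]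
  ring

lemma neg_bivariatePoly {K : Type*} [CommRing K] (c : ℕ → ℕ → K) (M : ℕ) (x y : K) :
    -bivariatePoly c M x y = bivariatePoly (fun r s => -c r s) M x y := by
  simp only [bivariatePoly, neg_mul, sum_neg_distrib]

open Complex in
lemma succ_mul_coeff_eq_of_cauchyRiemann {R : ℕ} {a A : ℕ → ℕ → ℝ}
    (hCR1 : ∀ x y, deriv (fun t => bivariatePoly a (R + 1) t y) x
      = deriv (fun t => bivariatePoly A (R + 1) x t) y)
    (hCR2 : ∀ x y, deriv (fun t => bivariatePoly a (R + 1) x t) y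
      = -deriv (fun t => bivariatePoly A (R + 1) t y) x) :
    ∀ r ≤ R, ∀ s < r,
      ((s : ℂ) + 1) * ⟨a r (s + 1), A r (s + 1)⟩ = I * (r - s : ℕ) * ⟨a r s, A r s⟩ := by
  simp only [(hasDerivAt_bivariatePoly_fst _ _ _ _).deriv,
    (hasDerivAt_bivariatePoly_snd _ _ _ _).deriv, neg_bivariatePoly] at hCR1 hCR2
  intro r hr s hs
  obtain ⟨r, rfl⟩ : ∃ r', r = r' + 1 := ⟨r - 1, by omega⟩
  have h1 := coeff_eq_of_forall_bivariatePoly_eq hCR1 r (by omega) s (by omega)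
  have h2 := coeff_eq_of_forall_bivariatePoly_eq hCR2 r (by omega) s (by omega)
  apply Complex.ext <;> simp <;> linarith

/-- If the bivariate real polynomials `u`, `v` with coefficients
`a r s`, `A r s` satisfy the Cauchy–Riemann equations, then `u` and `v` admit
the compact representation in terms of real and imaginary parts of `(x+iy)^r`. -/
theorem stmt_0 (R : ℕ) (a A : ℕ → ℕ → ℝ) (u v : ℝ → ℝ → ℝ)
    (hu : ∀ x y : ℝ, u x y =
      ∑ r ∈ Finset.range (R + 1), ∑ s ∈ Finset.range (r + 1),
        a r s * x ^ (r - s) * y ^ s)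
    (hv : ∀ x y : ℝ, v x y =
      ∑ r ∈ Finset.range (R + 1), ∑ s ∈ Finset.range (r + 1),
        A r s * x ^ (r - s) * y ^ s)
    (hCR1 : ∀ x y : ℝ, deriv (fun t => u t y) x = deriv (fun t => v x t) y)
    (hCR2 : ∀ x y : ℝ, deriv (fun t => u x t) y = - deriv (fun t => v t y) x) :
    ∀ x y : ℝ,
      u x y = a 0 0 + ∑ r ∈ Finset.Icc 1 R,
        (a r 0 * (((x : ℂ) + (y : ℂ) * Complex.I) ^ r).re
          + (a r 1 / r) * (((x : ℂ) + (y : ℂ) * Complex.I) ^ r).im)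
      ∧
      v x y = A 0 0 + ∑ r ∈ Finset.Icc 1 R,
        (a r 0 * (((x : ℂ) + (y : ℂ) * Complex.I) ^ r).im
          - (a r 1 / r) * (((x : ℂ) + (y : ℂ) * Complex.I) ^ r).re) := by
  obtain rfl : u = bivariatePoly a (R + 1) := funext fun x => funext (hu x)
  obtain rfl : v = bivariatePoly A (R + 1) := funext fun x => funext (hv x)
  set b : ℕ → ℕ → ℂ := fun r s => ⟨a r s, A r s⟩ with hb_def
  have hb : ∀ r < R + 1, ∀ s ≤ r, b r s = r.choose s * Complex.I ^ s * b r 0 := fun r hr =>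
    eq_choose_mul_pow_of_succ_mul_eq
      (succ_mul_coeff_eq_of_cauchyRiemann hCR1 hCR2 r (Nat.lt_succ_iff.mp hr))
  have hb0 : ∀ r ∈ Icc 1 R, b r 0 = ⟨a r 0, -(a r 1 / r)⟩ := by
    intro r hr
    obtain ⟨hr1, hrR⟩ := mem_Icc.mp hr
    have hr0 : (r : ℝ) ≠ 0 := by positivity
    have h : a r 1 = -(r * A r 0) := by
      simpa [hb_def] using congrArg Complex.re (hb r (by omega) 1 hr1)
    refine Complex.ext rfl ?_
    change A r 0 = -(a r 1 / r)
    rw [h]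
    field_simp
  intro x y
  have hsum : bivariatePoly b (R + 1) x y
      = b 0 0 + ∑ r ∈ Icc 1 R, ⟨a r 0, -(a r 1 / r)⟩ * ((x : ℂ) + y * Complex.I) ^ r := by
    rw [bivariatePoly_eq_sum_pow hb, range_eq_Ico, sum_eq_sum_Ico_succ_bot R.succ_pos,
      pow_zero, mul_one]
    exact congrArg _ (sum_congr (Ico_add_one_right_eq_Icc 1 R) fun r hr => by rw [hb0 r hr])
  constructor
  · rw [← re_bivariatePoly b, hsum]
    simp [Complex.re_sum, hb_def]
  · rw [← im_bivariatePoly b, hsum]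
    simp [Complex.im_sum, hb_def, ← sub_eq_add_neg, sum_sub_distrib]
end

section
/- Let R be a natural number and let u, v : ℝ² → ℝ be the polynomial functions u(x,y) = Σ_{r=0}^{R} Σ_{s=0}^{r} a_r^s x^{r-s} y^s and v(x,y) = Σ_{r=0}^{R} Σ_{s=0}^{r} A_r^s x^{r-s} y^s with real coefficients satisfying the Cauchy–Riemann equations (∂u/∂x = ∂v/∂y and ∂u/∂y = −∂v/∂x identically on ℝ²). Then for every 1 ≤ r ≤ R and every 0 ≤ s ≤ r: if s is even then a_r^s = (−1)^{s/2} · C(r,s) · a_r^0, and if s is odd then a_r^s = (−1)^{(s−1)/2} · (1/r) · C(r,s) · a_r^1, where C(r,s) is the binomial coefficient. -/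
/-!
Comparing coefficients of the monomial `x ^ (r - 1 - s) * y ^ s` in the two Cauchy–Riemann
equations gives `(r - s) a_r^s = (s + 1) A_r^(s+1)` and `(s + 1) a_r^(s+1) = -(r - s) A_r^s`.
Eliminating `A` yields the two-step recurrence
`(s + 2) (s + 1) a_r^(s+2) = -(r - s) (r - s - 1) a_r^s`, which `(-1)^(s/2) C(r,s)` satisfies as
well, so within each parity class `a_r^s` is proportional to it, the constant being fixed at
`s = 0` or `s = 1` (where `C(r,1) = r`).
-/

open Finset MvPolynomial

noncomputable def bivarPoly (N : ℕ) (c : ℕ → ℕ → ℝ) (x y : ℝ) : ℝ :=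
  ∑ r ∈ range N, ∑ s ∈ range (r + 1), c r s * x ^ (r - s) * y ^ s

noncomputable def bivarMvPoly (N : ℕ) (c : ℕ → ℕ → ℝ) : MvPolynomial (Fin 2) ℝ :=
  ∑ r ∈ range N, ∑ s ∈ range (r + 1),
    monomial (Finsupp.single 0 (r - s) + Finsupp.single 1 s) (c r s)

section BivarPoly

variable {N : ℕ} {c d : ℕ → ℕ → ℝ}

lemma eval_bivarMvPoly (g : Fin 2 → ℝ) :
    eval g (bivarMvPoly N c) = bivarPoly N c (g 0) (g 1) := by
  simp only [bivarMvPoly, bivarPoly, map_sum, eval_monomial]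
  refine sum_congr rfl fun r _ => sum_congr rfl fun s _ => ?_
  rw [Finsupp.prod_add_index (by simp) (fun _ _ _ _ => pow_add _ _ _),
    Finsupp.prod_single_index (by simp), Finsupp.prod_single_index (by simp), mul_assoc]

lemma eq_of_single_sub_add_single_eq {r s r' s' : ℕ} (hs : s ≤ r) (hs' : s' ≤ r')
    (h : Finsupp.single 0 (r' - s') + Finsupp.single (1 : Fin 2) s' =
      Finsupp.single 0 (r - s) + Finsupp.single 1 s) : r' = r ∧ s' = s := by
  have h0 := congrArg (· 0) h
  have h1 := congrArg (· 1) h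
  simp only [Finsupp.add_apply, Finsupp.single_eq_same, Finsupp.single_apply, Fin.one_eq_zero_iff,
    Fin.zero_eq_one_iff, if_false, add_zero, zero_add, OfNat.ofNat_ne_one] at h0 h1
  omega

lemma coeff_bivarMvPoly {r s : ℕ} (hr : r < N) (hs : s ≤ r) :
    coeff (Finsupp.single 0 (r - s) + Finsupp.single 1 s) (bivarMvPoly N c) = c r s := by
  simp only [bivarMvPoly, coeff_sum, coeff_monomial]
  rw [sum_eq_single r, sum_eq_single s, if_pos rfl]
  · intro s' hs' hne
    exact if_neg fun h => hne (eq_of_single_sub_add_single_eq hs (mem_range_succ_iff.1 hs') h).2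
  · exact fun hs' => absurd (mem_range_succ_iff.2 hs) hs'
  · intro r' _ hne
    refine sum_eq_zero fun s' hs' => if_neg fun h => hne ?_
    exact (eq_of_single_sub_add_single_eq hs (mem_range_succ_iff.1 hs') h).1
  · exact fun hr' => absurd (mem_range.2 hr) hr'

theorem bivarPoly_coeff_eq_of_eq (h : bivarPoly N c = bivarPoly N d) {r s : ℕ} (hr : r < N)
    (hs : s ≤ r) : c r s = d r s := by
  have hpoly : bivarMvPoly N c = bivarMvPoly N d :=
    MvPolynomial.funext fun g => by rw [eval_bivarMvPoly, eval_bivarMvPoly, h]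
  rw [← coeff_bivarMvPoly (c := c) hr hs, ← coeff_bivarMvPoly (c := d) hr hs, hpoly]

lemma bivarPoly_neg (x y : ℝ) : bivarPoly N (fun r s => -c r s) x y = -bivarPoly N c x y := by
  simp only [bivarPoly, neg_mul, sum_neg_distrib]

lemma hasDerivAt_bivarPoly_fst (x y : ℝ) :
    HasDerivAt (fun t => bivarPoly (N + 1) c t y)
      (bivarPoly N (fun r s => ((r + 1 - s : ℕ) : ℝ) * c (r + 1) s) x y) x := by
  have h := HasDerivAt.fun_sum (u := range (N + 1)) fun r _ =>
    HasDerivAt.fun_sum (u := range (r + 1)) fun s _ =>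
      ((hasDerivAt_pow (r - s) x).const_mul (c r s)).mul_const (y ^ s)
  refine h.congr_deriv ?_
  rw [sum_range_succ', bivarPoly]
  simp only [zero_add, sum_range_one, Nat.sub_self, Nat.cast_zero, zero_mul, mul_zero, add_zero]
  refine sum_congr rfl fun r _ => ?_
  rw [sum_range_succ, Nat.sub_self, Nat.cast_zero, zero_mul, mul_zero, zero_mul, add_zero]
  refine sum_congr rfl fun s _ => ?_
  rw [show r + 1 - s - 1 = r - s by omega]
  ring

lemma hasDerivAt_bivarPoly_snd (x y : ℝ) :
    HasDerivAt (fun t => bivarPoly (N + 1) c x t)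
      (bivarPoly N (fun r s => ((s + 1 : ℕ) : ℝ) * c (r + 1) (s + 1)) x y) y := by
  have h := HasDerivAt.fun_sum (u := range (N + 1)) fun r _ =>
    HasDerivAt.fun_sum (u := range (r + 1)) fun s _ =>
      (hasDerivAt_pow s y).const_mul (c r s * x ^ (r - s))
  refine h.congr_deriv ?_
  rw [sum_range_succ', bivarPoly]
  simp only [zero_add, sum_range_one, Nat.cast_zero, zero_mul, mul_zero, add_zero]
  refine sum_congr rfl fun r _ => ?_
  rw [sum_range_succ', Nat.cast_zero, zero_mul, mul_zero, add_zero]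
  refine sum_congr rfl fun s _ => ?_
  rw [show r + 1 - (s + 1) = r - s by omega, Nat.add_sub_cancel]
  ring

end BivarPoly

theorem mul_eq_mul_of_two_step_recurrence {M : Type*} [CommMonoidWithZero M]
    [IsCancelMulZero M] {n : ℕ} {p q f g : ℕ → M} (hp : ∀ s, s + 2 ≤ n → p s ≠ 0)
    (hf : ∀ s, s + 2 ≤ n → p s * f (s + 2) = q s * f s)
    (hg : ∀ s, s + 2 ≤ n → p s * g (s + 2) = q s * g s) :
    ∀ s ≤ n, f s * g (s % 2) = g s * f (s % 2) := by
  intro s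
  induction s using Nat.twoStepInduction with
  | zero => exact fun _ => mul_comm _ _
  | one => exact fun _ => mul_comm _ _
  | more s ih _ =>
    intro hs
    rw [Nat.add_mod_right]
    refine mul_left_cancel₀ (hp s hs) ?_
    rw [← mul_assoc, hf s hs, mul_assoc, ih (by omega), ← mul_assoc, ← hg s hs, mul_assoc]

lemma Nat.cast_choose_add_two_mul {n s : ℕ} (hs : s + 2 ≤ n) :
    (n.choose (s + 2) : ℝ) * (((s : ℝ) + 2) * ((s : ℝ) + 1)) =
      n.choose s * (((n : ℝ) - s) * ((n : ℝ) - s - 1)) := by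
  have h1 : (n.choose (s + 1) : ℝ) * ((s : ℝ) + 1) = n.choose s * ((n : ℝ) - s) := by
    have := congrArg (Nat.cast (R := ℝ)) (Nat.choose_succ_right_eq n s)
    push_cast [Nat.cast_sub (show s ≤ n by omega)] at this
    exact this
  have h2 :
      (n.choose (s + 2) : ℝ) * ((s : ℝ) + 2) = n.choose (s + 1) * ((n : ℝ) - s - 1) := by
    have := congrArg (Nat.cast (R := ℝ)) (Nat.choose_succ_right_eq n (s + 1))
    push_cast [Nat.cast_sub (show s + 1 ≤ n by omega)] at this
    linear_combination this
  linear_combination ((s : ℝ) + 1) * h2 + ((n : ℝ) - s - 1) * h1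

section CauchyRiemann

variable {R : ℕ} {a A : ℕ → ℕ → ℝ}
  (hCR1 : ∀ x y : ℝ,
    deriv (fun t => bivarPoly (R + 1) a t y) x = deriv (fun t => bivarPoly (R + 1) A x t) y)
  (hCR2 : ∀ x y : ℝ,
    deriv (fun t => bivarPoly (R + 1) a x t) y = -deriv (fun t => bivarPoly (R + 1) A t y) x)
include hCR1 hCR2

lemma coeff_relations_of_cauchyRiemann {r s : ℕ} (hr : r < R) (hs : s ≤ r) :
    ((r + 1 - s : ℕ) : ℝ) * a (r + 1) s = ((s + 1 : ℕ) : ℝ) * A (r + 1) (s + 1) ∧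
      ((s + 1 : ℕ) : ℝ) * a (r + 1) (s + 1) = -(((r + 1 - s : ℕ) : ℝ) * A (r + 1) s) := by
  have hx : bivarPoly R (fun r s => ((r + 1 - s : ℕ) : ℝ) * a (r + 1) s) =
      bivarPoly R (fun r s => ((s + 1 : ℕ) : ℝ) * A (r + 1) (s + 1)) := by
    ext x y
    rw [← (hasDerivAt_bivarPoly_fst x y).deriv, ← (hasDerivAt_bivarPoly_snd x y).deriv]
    exact hCR1 x y
  have hy : bivarPoly R (fun r s => ((s + 1 : ℕ) : ℝ) * a (r + 1) (s + 1)) =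
      bivarPoly R (fun r s => -(((r + 1 - s : ℕ) : ℝ) * A (r + 1) s)) := by
    ext x y
    rw [← (hasDerivAt_bivarPoly_snd x y).deriv, bivarPoly_neg,
      ← (hasDerivAt_bivarPoly_fst x y).deriv]
    exact hCR2 x y
  exact ⟨bivarPoly_coeff_eq_of_eq hx hr hs, bivarPoly_coeff_eq_of_eq hy hr hs⟩

lemma coeff_recurrence_of_cauchyRiemann {r s : ℕ} (hr : 1 ≤ r) (hrR : r ≤ R)
    (hs : s + 2 ≤ r) :
    ((s : ℝ) + 2) * ((s : ℝ) + 1) * a r (s + 2) =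
      -(((r : ℝ) - s) * ((r : ℝ) - s - 1)) * a r s := by
  obtain ⟨n, rfl⟩ : ∃ n, r = n + 1 := ⟨r - 1, by omega⟩
  have h1 := (coeff_relations_of_cauchyRiemann hCR1 hCR2 (by omega : n < R)
    (by omega : s ≤ n)).1
  have h2 := (coeff_relations_of_cauchyRiemann hCR1 hCR2 (by omega : n < R)
    (by omega : s + 1 ≤ n)).2
  rw [show n + 1 - (s + 1) = n - s by omega] at h2
  push_cast [Nat.cast_sub (show s ≤ n + 1 by omega), Nat.cast_sub (show s ≤ n by omega)]
    at h1 h2 ⊢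
  linear_combination ((s : ℝ) + 1) * h2 + ((n : ℝ) - s) * h1

end CauchyRiemann

/-- Under the Cauchy–Riemann equations, for `1 ≤ r ≤ R` and
`0 ≤ s ≤ r`: if `s` is even then `a_r^s = (−1)^{s/2}·C(r,s)·a_r^0`, and if `s`
is odd then `a_r^s = (−1)^{(s−1)/2}·(1/r)·C(r,s)·a_r^1`. -/
theorem stmt_4 (R : ℕ) (a A : ℕ → ℕ → ℝ) (u v : ℝ → ℝ → ℝ)
    (hu : ∀ x y : ℝ, u x y =
      ∑ r ∈ Finset.range (R + 1), ∑ s ∈ Finset.range (r + 1),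
        a r s * x ^ (r - s) * y ^ s)
    (hv : ∀ x y : ℝ, v x y =
      ∑ r ∈ Finset.range (R + 1), ∑ s ∈ Finset.range (r + 1),
        A r s * x ^ (r - s) * y ^ s)
    (hCR1 : ∀ x y : ℝ, deriv (fun t => u t y) x = deriv (fun t => v x t) y)
    (hCR2 : ∀ x y : ℝ, deriv (fun t => u x t) y = - deriv (fun t => v t y) x) :
    ∀ r s : ℕ, 1 ≤ r → r ≤ R → s ≤ r →
      (Even s → a r s = (-1 : ℝ) ^ (s / 2) * (r.choose s : ℝ) * a r 0) ∧
      (Odd s → a r s = (-1 : ℝ) ^ ((s - 1) / 2) * (1 / (r : ℝ)) * (r.choose s : ℝ) * a r 1) := by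
  obtain rfl : u = bivarPoly (R + 1) a := funext₂ hu
  obtain rfl : v = bivarPoly (R + 1) A := funext₂ hv
  intro r s hr hrR hs
  have key := mul_eq_mul_of_two_step_recurrence (f := a r)
    (g := fun s => (-1 : ℝ) ^ (s / 2) * (r.choose s : ℝ)) (fun s _ => by positivity)
    (fun s hs => coeff_recurrence_of_cauchyRiemann hCR1 hCR2 hr hrR hs)
    (fun s hs => by
      rw [show (s + 2) / 2 = s / 2 + 1 by omega, pow_succ]
      linear_combination (-(-1 : ℝ) ^ (s / 2)) * Nat.cast_choose_add_two_mul hs) s hs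
  constructor
  · intro hs2
    simpa [Nat.even_iff.1 hs2] using key
  · intro hs2
    have hr0 : (r : ℝ) ≠ 0 := by positivity
    have hs1 : s % 2 = 1 := Nat.odd_iff.1 hs2
    rw [hs1] at key
    rw [show (s - 1) / 2 = s / 2 by omega]
    field_simp
    simpa using key
end

section
/- Let R be a natural number and let u, v : ℝ² → ℝ be the polynomial functions u(x,y) = Σ_{r=0}^{R} Σ_{s=0}^{r} a_r^s x^{r-s} y^s and v(x,y) = Σ_{r=0}^{R} Σ_{s=0}^{r} A_r^s x^{r-s} y^s with real coefficients satisfying the Cauchy–Riemann equations (∂u/∂x = ∂v/∂y and ∂u/∂y = −∂v/∂x identically on ℝ²). Then for every 1 ≤ r ≤ R and every 0 ≤ s ≤ r: if s is odd then A_r^s = (−1)^{(s−1)/2} · C(r,s) · a_r^0, and if s is even then A_r^s = −(−1)^{s/2} · (1/r) · C(r,s) · a_r^1, where C(r,s) is the binomial coefficient. -/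
/-!
Write `P` and `Q` for the polynomials with `u = eval P` and `v = eval Q`. The Cauchy–Riemann
equations are polynomial identities `∂₀P = ∂₁Q`, `∂₁P = -∂₀Q`, so they can be read off
coefficientwise. In degree `r`, with `γ s = a_r^s + i A_r^s`, they say exactly
`(s + 1) γ (s + 1) = i (r - s) γ s`, i.e. the degree-`r` part of `u + i v` is `γ 0 · (x + i y)^r`,
so `γ s = i^s C(r,s) γ 0`. Taking imaginary parts gives the claim, using `a_r^1 = -r A_r^0`
(the case `s = 0` of the recurrence) for even `s`.
-/

open MvPolynomial Finset Complex

theorem MvPolynomial.hasDerivAt_eval_update {𝕜 σ : Type*} [NontriviallyNormedField 𝕜]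
    [DecidableEq σ] (p : MvPolynomial σ 𝕜) (v : σ → 𝕜) (i : σ) :
    HasDerivAt (fun t => eval (Function.update v i t) p) (eval v (pderiv i p)) (v i) := by
  induction p using MvPolynomial.induction_on with
  | C a => simpa using hasDerivAt_const (v i) a
  | add p q hp hq =>
    simp only [map_add]
    exact hp.fun_add hq
  | mul_X p j hp =>
    have hX : HasDerivAt (fun t => Function.update v i t j) (eval v (pderiv i (X j))) (v i) := by
      rcases eq_or_ne j i with rfl | hji
      · simpa using hasDerivAt_id' (v j)
      · simpa [hji, pderiv_X_of_ne hji] using hasDerivAt_const (v i) (v j)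
    simp only [map_mul, eval_X]
    refine (hp.fun_mul hX).congr_deriv ?_
    simp only [Function.update_eq_self, Derivation.leibniz, smul_eq_mul, map_add, map_mul, eval_X]
    ring

theorem MvPolynomial.deriv_eval_fst {𝕜 : Type*} [NontriviallyNormedField 𝕜]
    (p : MvPolynomial (Fin 2) 𝕜) (x y : 𝕜) :
    deriv (fun t => eval ![t, y] p) x = eval ![x, y] (pderiv 0 p) := by
  have h := hasDerivAt_eval_update p ![x, y] 0
  have hupdate : ∀ t, Function.update ![x, y] 0 t = ![t, y] := fun t => by
    ext k; fin_cases k <;> rfl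
  simp only [hupdate] at h
  exact h.deriv

theorem MvPolynomial.deriv_eval_snd {𝕜 : Type*} [NontriviallyNormedField 𝕜]
    (p : MvPolynomial (Fin 2) 𝕜) (x y : 𝕜) :
    deriv (fun t => eval ![x, t] p) y = eval ![x, y] (pderiv 1 p) := by
  have h := hasDerivAt_eval_update p ![x, y] 1
  have hupdate : ∀ t, Function.update ![x, y] 1 t = ![x, t] := fun t => by
    ext k; fin_cases k <;> rfl
  simp only [hupdate] at h
  exact h.deriv

section bivariateOfCoeffs

variable {K : Type*} [CommSemiring K]

noncomputable def bivariateOfCoeffs (R : ℕ) (a : ℕ → ℕ → K) : MvPolynomial (Fin 2) K :=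
  ∑ r ∈ range (R + 1), ∑ s ∈ range (r + 1),
    monomial (Finsupp.single 0 (r - s) + Finsupp.single 1 s) (a r s)

theorem eval_bivariateOfCoeffs (R : ℕ) (a : ℕ → ℕ → K) (x y : K) :
    eval ![x, y] (bivariateOfCoeffs R a) =
      ∑ r ∈ range (R + 1), ∑ s ∈ range (r + 1), a r s * x ^ (r - s) * y ^ s := by
  simp [bivariateOfCoeffs, eval_monomial, Finsupp.prod_add_index', pow_add, mul_assoc]

theorem coeff_bivariateOfCoeffs (R : ℕ) (a : ℕ → ℕ → K) (i j : ℕ) :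
    coeff (Finsupp.single 0 i + Finsupp.single 1 j) (bivariateOfCoeffs R a) =
      if i + j ≤ R then a (i + j) j else 0 := by
  have hmonomial : ∀ r s, Finsupp.single 0 (r - s) + Finsupp.single 1 s =
      (Finsupp.single 0 i + Finsupp.single 1 j : Fin 2 →₀ ℕ) ↔ r - s = i ∧ s = j := by
    simp [Finsupp.ext_iff, Fin.forall_fin_two]
  have hinner : ∀ r, (∑ s ∈ range (r + 1), if r - s = i ∧ s = j then a r s else 0) =
      if r = i + j then a (i + j) j else 0 := by
    intro r
    split_ifs with hr
    · rw [Finset.sum_eq_single j (by grind) (by grind)]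
      grind
    · exact Finset.sum_eq_zero (by grind)
  simp only [bivariateOfCoeffs, coeff_sum, coeff_monomial, hmonomial]
  simp [hinner, Finset.sum_ite_eq']

theorem coeff_pderiv_zero_bivariateOfCoeffs (R : ℕ) (a : ℕ → ℕ → K) (i j : ℕ) :
    coeff (Finsupp.single 0 i + Finsupp.single 1 j) (pderiv 0 (bivariateOfCoeffs R a)) =
      if i + j + 1 ≤ R then a (i + j + 1) j * (i + 1) else 0 := by
  rw [coeff_pderiv, add_right_comm, ← Finsupp.single_add, coeff_bivariateOfCoeffs]
  simp [add_right_comm]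

theorem coeff_pderiv_one_bivariateOfCoeffs (R : ℕ) (a : ℕ → ℕ → K) (i j : ℕ) :
    coeff (Finsupp.single 0 i + Finsupp.single 1 j) (pderiv 1 (bivariateOfCoeffs R a)) =
      if i + j + 1 ≤ R then a (i + j + 1) (j + 1) * (j + 1) else 0 := by
  rw [coeff_pderiv, add_assoc, ← Finsupp.single_add, coeff_bivariateOfCoeffs]
  simp [add_assoc]

end bivariateOfCoeffs

theorem succ_mul_coeff_eq_of_pderiv_eq {R : ℕ} {a A : ℕ → ℕ → ℝ}
    (h₁ : pderiv 0 (bivariateOfCoeffs R a) = pderiv 1 (bivariateOfCoeffs R A))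
    (h₂ : pderiv 1 (bivariateOfCoeffs R a) = -pderiv 0 (bivariateOfCoeffs R A))
    {r s : ℕ} (hsr : s < r) (hr : r ≤ R) :
    ((s : ℂ) + 1) * (a r (s + 1) + A r (s + 1) * I) = I * ((r : ℂ) - s) * (a r s + A r s * I) := by
  obtain ⟨i, rfl⟩ : ∃ i, r = i + s + 1 := ⟨r - s - 1, by omega⟩
  have e₁ := congrArg (coeff (Finsupp.single 0 i + Finsupp.single 1 s)) h₁
  have e₂ := congrArg (coeff (Finsupp.single 0 i + Finsupp.single 1 s)) h₂
  simp only [coeff_neg, coeff_pderiv_zero_bivariateOfCoeffs, coeff_pderiv_one_bivariateOfCoeffs,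
    if_pos hr] at e₁ e₂
  apply Complex.ext <;> simp <;> linarith

theorem eq_pow_mul_choose_of_succ_mul_eq {K : Type*} [Field K] [CharZero K] {γ : ℕ → K} {c : K}
    {n : ℕ} (h : ∀ s < n, ((s : K) + 1) * γ (s + 1) = c * ((n : K) - s) * γ s) :
    ∀ s ≤ n, γ s = c ^ s * n.choose s * γ 0 := by
  intro s hs
  induction s with
  | zero => simp
  | succ s ih =>
    have hchoose : ((s : K) + 1) * n.choose (s + 1) = ((n : K) - s) * n.choose s := by
      have := congrArg (Nat.cast : ℕ → K) (Nat.choose_succ_right_eq n s)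
      push_cast [Nat.cast_sub (by omega : s ≤ n)] at this
      linear_combination this
    apply mul_left_cancel₀ (Nat.cast_add_one_ne_zero s)
    rw [h s hs, ih (by omega)]
    linear_combination -(c ^ (s + 1) * γ 0) * hchoose

theorem Complex.I_pow_two_mul (k : ℕ) : I ^ (2 * k) = (((-1) ^ k : ℝ) : ℂ) := by
  rw [pow_mul, I_sq]
  push_cast
  rfl

theorem Complex.im_I_pow_mul_of_even {s : ℕ} (hs : Even s) (z : ℂ) :
    (I ^ s * z).im = (-1) ^ (s / 2) * z.im := by
  obtain ⟨k, rfl⟩ := hs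
  rw [← two_mul, I_pow_two_mul, im_ofReal_mul]
  simp

theorem Complex.im_I_pow_mul_of_odd {s : ℕ} (hs : Odd s) (z : ℂ) :
    (I ^ s * z).im = (-1) ^ ((s - 1) / 2) * z.re := by
  obtain ⟨k, rfl⟩ := hs
  rw [pow_succ, I_pow_two_mul, mul_assoc, im_ofReal_mul]
  simp

/-- Under the Cauchy–Riemann equations, for `1 ≤ r ≤ R` and
`0 ≤ s ≤ r`: if `s` is odd then `A_r^s = (−1)^{(s−1)/2}·C(r,s)·a_r^0`, and if
`s` is even then `A_r^s = −(−1)^{s/2}·(1/r)·C(r,s)·a_r^1`. -/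
theorem stmt_5 (R : ℕ) (a A : ℕ → ℕ → ℝ) (u v : ℝ → ℝ → ℝ)
    (hu : ∀ x y : ℝ, u x y =
      ∑ r ∈ Finset.range (R + 1), ∑ s ∈ Finset.range (r + 1),
        a r s * x ^ (r - s) * y ^ s)
    (hv : ∀ x y : ℝ, v x y =
      ∑ r ∈ Finset.range (R + 1), ∑ s ∈ Finset.range (r + 1),
        A r s * x ^ (r - s) * y ^ s)
    (hCR1 : ∀ x y : ℝ, deriv (fun t => u t y) x = deriv (fun t => v x t) y)
    (hCR2 : ∀ x y : ℝ, deriv (fun t => u x t) y = - deriv (fun t => v t y) x) :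
    ∀ r s : ℕ, 1 ≤ r → r ≤ R → s ≤ r →
      (Odd s → A r s = (-1 : ℝ) ^ ((s - 1) / 2) * (r.choose s : ℝ) * a r 0) ∧
      (Even s → A r s = -((-1 : ℝ) ^ (s / 2)) * (1 / (r : ℝ)) * (r.choose s : ℝ) * a r 1) := by
  intro r s hr hrR hsr
  obtain rfl : u = fun x y => eval ![x, y] (bivariateOfCoeffs R a) := by
    ext x y; rw [hu, eval_bivariateOfCoeffs]
  obtain rfl : v = fun x y => eval ![x, y] (bivariateOfCoeffs R A) := by
    ext x y; rw [hv, eval_bivariateOfCoeffs]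
  have heta : ∀ w : Fin 2 → ℝ, ![w 0, w 1] = w := fun w => by ext k; fin_cases k <;> rfl
  have h₁ : pderiv 0 (bivariateOfCoeffs R a) = pderiv 1 (bivariateOfCoeffs R A) :=
    MvPolynomial.funext fun w => by
      simpa [deriv_eval_fst, deriv_eval_snd, heta] using hCR1 (w 0) (w 1)
  have h₂ : pderiv 1 (bivariateOfCoeffs R a) = -pderiv 0 (bivariateOfCoeffs R A) :=
    MvPolynomial.funext fun w => by
      simpa [deriv_eval_fst, deriv_eval_snd, heta] using hCR2 (w 0) (w 1)
  have hrec := fun s (hs : s < r) => succ_mul_coeff_eq_of_pderiv_eq h₁ h₂ hs hrR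
  have hγ := congrArg Complex.im
    (eq_pow_mul_choose_of_succ_mul_eq (γ := fun s => a r s + A r s * I) hrec s hsr)
  have ha₁ : a r 1 = -(r * A r 0) := by simpa using congrArg Complex.re (hrec 0 hr)
  refine ⟨fun hs => ?_, fun hs => ?_⟩
  · simpa [mul_assoc, im_I_pow_mul_of_odd hs] using hγ
  · have hAs : A r s = (-1) ^ (s / 2) * (r.choose s * A r 0) := by
      simpa [mul_assoc, im_I_pow_mul_of_even hs] using hγ
    have hr₀ : (r : ℝ) ≠ 0 := by positivity
    rw [hAs, ha₁]
    field_simp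
end

section
/- For every real number t, the expression −8·e^{2√2·t} + 3(2+√2)·e^{4√2·t} + 6 − 3√2 is nonzero. -/
/-- For every real `t`, the denominator
`−8·e^{2√2·t} + 3(2+√2)·e^{4√2·t} + 6 − 3√2` is nonzero. -/
theorem stmt_8 (t : ℝ) :
    -8 * Real.exp (2 * Real.sqrt 2 * t)
      + 3 * (2 + Real.sqrt 2) * Real.exp (4 * Real.sqrt 2 * t)
      + 6 - 3 * Real.sqrt 2 ≠ 0 := by
  have hu : (0:ℝ) < Real.exp (2 * Real.sqrt 2 * t) := Real.exp_pos _
  have hsq : Real.exp (4 * Real.sqrt 2 * t) = Real.exp (2 * Real.sqrt 2 * t) ^ 2 := by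
    rw [← Real.exp_nat_mul]; ring_nf
  have h2 : Real.sqrt 2 ^ 2 = 2 := Real.sq_sqrt (by norm_num)
  have hs : Real.sqrt 2 < 2 := by
    nlinarith [Real.sqrt_nonneg 2]
  set u := Real.exp (2 * Real.sqrt 2 * t) with hu'
  rw [hsq]
  nlinarith [sq_nonneg (3 * (2 + Real.sqrt 2) * u - 4), Real.sqrt_nonneg 2, sq_nonneg u]
end

section
/- Define D(t) := −8·e^{2√2·t} + 3(2+√2)·e^{4√2·t} + 6 − 3√2, x(t) := (2·e^{2√2·t} + 3(1+√2)·e^{4√2·t} + 3 − 3√2)/D(t), and y(t) := (−2·e^{2√2·t} + 3(1+√2)·e^{4√2·t} + 3 − 3√2)/D(t) for t ∈ ℝ (D(t) ≠ 0 for all real t). Then x and y are differentiable on ℝ, x(0) = 2, y(0) = 1, and for all real t: ẋ(t) = 1 − x(t)² − 2x(t)y(t) + y(t)² and ẏ(t) = 1 + x(t)² − 2x(t)y(t) − y(t)². -/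
/-!
With `u = e^{2√2 t}`, `x` and `y` are quotients of quadratics in `u` with coefficients in `ℚ(√2)`.
Since `du/dt = 2√2 u`, the quotient rule turns each differential equation into a polynomial
identity in `u` and `s = √2` that holds modulo `s² = 2`. The common denominator has leading
coefficient `3(2 + √2) > 0` and negative discriminant, so it never vanishes.
-/

open Real

theorem HasDerivAt.div_of_wronskian_eq {f g : ℝ → ℝ} {f' g' r x : ℝ} (hf : HasDerivAt f f' x)
    (hg : HasDerivAt g g' x) (hx : g x ≠ 0) (h : f' * g x - f x * g' = r * g x ^ 2) :
    HasDerivAt (fun t => f t / g t) r x :=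
  (hf.div hg hx).congr_deriv <| by rw [h]; field_simp

theorem hasDerivAt_quadratic_exp (a b c k t : ℝ) :
    HasDerivAt (fun t => a * exp (k * t) ^ 2 + b * exp (k * t) + c)
      (k * exp (k * t) * (2 * a * exp (k * t) + b)) t := by
  have he : HasDerivAt (fun t => exp (k * t)) (exp (k * t) * k) t :=
    ((hasDerivAt_id t).const_mul k).exp.congr_deriv (by simp)
  exact (((he.pow 2).const_mul a).add (he.const_mul b)).add_const c |>.congr_deriv
    (by push_cast; ring)

namespace KineticSolution

-- Written as `a * u ^ 2 + b * u + c`, so that `hasDerivAt_quadratic_exp` applies as is.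
def den (s u : ℝ) : ℝ := 3 * (2 + s) * u ^ 2 + -8 * u + (6 - 3 * s)

def numX (s u : ℝ) : ℝ := 3 * (1 + s) * u ^ 2 + 2 * u + (3 - 3 * s)

def numY (s u : ℝ) : ℝ := 3 * (1 + s) * u ^ 2 + -2 * u + (3 - 3 * s)

variable {s : ℝ}

theorem den_pos (hs : s ^ 2 = 2) (u : ℝ) : 0 < den s u := by
  have hsq : 12 * (2 + s) * den s u = (6 * (2 + s) * u - 8) ^ 2 + 8 := by
    unfold den; linear_combination (-36) * hs
  have h2s : 0 < 2 + s := by nlinarith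
  nlinarith [sq_nonneg (6 * (2 + s) * u - 8)]

theorem numX_wronskian (hs : s ^ 2 = 2) (u : ℝ) :
    2 * s * u * (2 * (3 * (1 + s)) * u + 2) * den s u
        - numX s u * (2 * s * u * (2 * (3 * (2 + s)) * u + -8)) =
      den s u ^ 2 - numX s u ^ 2 - 2 * numX s u * numY s u + numY s u ^ 2 := by
  unfold den numX numY
  linear_combination (9 * u ^ 4 - 60 * u ^ 3 + 54 * u ^ 2 - 60 * u + 9) * hs

theorem numY_wronskian (hs : s ^ 2 = 2) (u : ℝ) :
    2 * s * u * (2 * (3 * (1 + s)) * u + -2) * den s u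
        - numY s u * (2 * s * u * (2 * (3 * (2 + s)) * u + -8)) =
      den s u ^ 2 + numX s u ^ 2 - 2 * numX s u * numY s u - numY s u ^ 2 := by
  unfold den numX numY
  linear_combination (9 * u ^ 4 - 36 * u ^ 3 + 54 * u ^ 2 - 36 * u + 9) * hs

noncomputable def xSol (s t : ℝ) : ℝ := numX s (exp (2 * s * t)) / den s (exp (2 * s * t))

noncomputable def ySol (s t : ℝ) : ℝ := numY s (exp (2 * s * t)) / den s (exp (2 * s * t))

theorem xSol_zero (s : ℝ) : xSol s 0 = 2 := by
  rw [xSol, mul_zero, exp_zero, numX, den]; ring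

theorem ySol_zero (s : ℝ) : ySol s 0 = 1 := by
  rw [ySol, mul_zero, exp_zero, numY, den]; ring

theorem hasDerivAt_den (t : ℝ) :
    HasDerivAt (fun t => den s (exp (2 * s * t)))
      (2 * s * exp (2 * s * t) * (2 * (3 * (2 + s)) * exp (2 * s * t) + -8)) t :=
  hasDerivAt_quadratic_exp _ _ _ _ t

theorem hasDerivAt_xSol (hs : s ^ 2 = 2) (t : ℝ) :
    HasDerivAt (xSol s) (1 - xSol s t ^ 2 - 2 * xSol s t * ySol s t + ySol s t ^ 2) t := by
  have hN : HasDerivAt (fun t => numX s (exp (2 * s * t)))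
      (2 * s * exp (2 * s * t) * (2 * (3 * (1 + s)) * exp (2 * s * t) + 2)) t :=
    hasDerivAt_quadratic_exp _ _ _ _ t
  have hden := (den_pos hs (exp (2 * s * t))).ne'
  refine hN.div_of_wronskian_eq (hasDerivAt_den t) hden ?_
  rw [numX_wronskian hs, xSol, ySol]
  field_simp

theorem hasDerivAt_ySol (hs : s ^ 2 = 2) (t : ℝ) :
    HasDerivAt (ySol s) (1 + xSol s t ^ 2 - 2 * xSol s t * ySol s t - ySol s t ^ 2) t := by
  have hN : HasDerivAt (fun t => numY s (exp (2 * s * t)))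
      (2 * s * exp (2 * s * t) * (2 * (3 * (1 + s)) * exp (2 * s * t) + -2)) t :=
    hasDerivAt_quadratic_exp _ _ _ _ t
  have hden := (den_pos hs (exp (2 * s * t))).ne'
  refine hN.div_of_wronskian_eq (hasDerivAt_den t) hden ?_
  rw [numY_wronskian hs, xSol, ySol]
  field_simp

end KineticSolution

open KineticSolution

/-- The explicit functions `x`, `y` solve the kinetic system
`ẋ = 1 − x² − 2xy + y²`, `ẏ = 1 + x² − 2xy − y²` with `x(0) = 2`, `y(0) = 1`. -/
theorem stmt_15 (D x y : ℝ → ℝ)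
    (hD : ∀ t : ℝ, D t =
      -8 * Real.exp (2 * Real.sqrt 2 * t)
        + 3 * (2 + Real.sqrt 2) * Real.exp (4 * Real.sqrt 2 * t)
        + 6 - 3 * Real.sqrt 2)
    (hx : ∀ t : ℝ, x t =
      (2 * Real.exp (2 * Real.sqrt 2 * t)
        + 3 * (1 + Real.sqrt 2) * Real.exp (4 * Real.sqrt 2 * t)
        + 3 - 3 * Real.sqrt 2) / D t)
    (hy : ∀ t : ℝ, y t =
      (-2 * Real.exp (2 * Real.sqrt 2 * t)
        + 3 * (1 + Real.sqrt 2) * Real.exp (4 * Real.sqrt 2 * t)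
        + 3 - 3 * Real.sqrt 2) / D t) :
    Differentiable ℝ x ∧ Differentiable ℝ y ∧ x 0 = 2 ∧ y 0 = 1 ∧
    (∀ t : ℝ, HasDerivAt x (1 - x t ^ 2 - 2 * x t * y t + y t ^ 2) t) ∧
    (∀ t : ℝ, HasDerivAt y (1 + x t ^ 2 - 2 * x t * y t - y t ^ 2) t) := by
  have hs : √2 ^ 2 = 2 := sq_sqrt zero_le_two
  have he : ∀ t, exp (4 * √2 * t) = exp (2 * √2 * t) ^ 2 := fun t => by
    rw [← exp_nat_mul]; ring_nf
  have hD' : ∀ t, D t = den √2 (exp (2 * √2 * t)) := fun t => by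
    rw [hD, he, den]; ring
  obtain rfl : x = xSol √2 := funext fun t => by rw [hx, hD', he, xSol, numX]; ring_nf
  obtain rfl : y = ySol √2 := funext fun t => by rw [hy, hD', he, ySol, numY]; ring_nf
  exact ⟨fun t => (hasDerivAt_xSol hs t).differentiableAt,
    fun t => (hasDerivAt_ySol hs t).differentiableAt, xSol_zero _, ySol_zero _,
    hasDerivAt_xSol hs, hasDerivAt_ySol hs⟩
end
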